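/- arXiv:2211.05060 — 4 statements merged into one kernel-verified Lean document; each statement's English description precedes it below -/
import Mathlib

section
/- Let d ∈ ℤ≥1, L ∈ 4ℤ≥1, g > 0, Λ = (ℤ/Lℤ)^d, and let Δ ∈ (0,1/2) be the unique solution of the gap equation 2 = |Λ|^{-1} Σ_{ξ∈Λ*} g (ω_ξ² + g²Δ²)^{-1/2}. Set a := |Λ|^{-1} Σ_{ξ∈Λ*} ω_ξ² / (ω_ξ² + (g/2)²). Then 1 − 4Δ² ≥ a/(1+a) ≥ a/2. -/
open Matrix
open scoped Kronecker BigOperators ComplexOrder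

/-- The discrete torus `Λ = (ℤ/Lℤ)^d`. -/
abbrev Lam (d L : ℕ) := Fin d → ZMod L

/-- The dispersion relation `ω_ξ = -∑_ν cos(ξ_ν)`, with the dual lattice
`Λ* = (2π/L)(ℤ/Lℤ)^d` identified with `Λ`. -/
noncomputable def omega (d L : ℕ) (ξ : Lam d L) : ℝ :=
  - ∑ ν, Real.cos (2 * Real.pi * ((ξ ν).val : ℝ) / (L : ℝ))

/-- The torus distance of `z ∈ ℤ/Lℤ` to `0`. -/
def zdist (L : ℕ) (z : ZMod L) : ℕ := min z.val (L - z.val)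

/-- The nearest-neighbour hopping matrix `T` on `ℓ²(Λ)`:
`T x y = -1` if the torus `ℓ¹`-distance of `x` and `y` is `1`, and `0` otherwise. -/
noncomputable def hopT (d L : ℕ) [NeZero L] : Matrix (Lam d L) (Lam d L) ℂ :=
  Matrix.of fun x y => if (∑ ν, zdist L (x ν - y ν)) = 1 then (-1 : ℂ) else 0

/-- The gauge involution `G`, i.e. multiplication by `(-1)^x = (-1)^{x₁+⋯+x_d}`. -/
noncomputable def gaugeG (d L : ℕ) [NeZero L] : Matrix (Lam d L) (Lam d L) ℂ :=
  Matrix.diagonal fun x => (-1 : ℂ) ^ (∑ ν, (x ν).val)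

/-- Pauli matrices. -/
noncomputable def sigma1 : Matrix (Fin 2) (Fin 2) ℂ := !![0, 1; 1, 0]
noncomputable def sigma2 : Matrix (Fin 2) (Fin 2) ℂ := !![0, Complex.I; -Complex.I, 0]
noncomputable def sigma3 : Matrix (Fin 2) (Fin 2) ℂ := !![1, 0; 0, -1]

/-- `a⃗ · σ⃗` for a vector `a⃗ ∈ ℝ³`. -/
noncomputable def pauliDot (a : EuclideanSpace ℝ (Fin 3)) : Matrix (Fin 2) (Fin 2) ℂ :=
  (a 0 : ℂ) • sigma1 + (a 1 : ℂ) • sigma2 + (a 2 : ℂ) • sigma3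

/-- The 2×2 spin block `γ_x` of a one-particle density matrix on `ℓ²(Λ)⊗ℂ²`. -/
noncomputable def spinBlock {d L : ℕ} [NeZero L]
    (γ : Matrix (Lam d L × Fin 2) (Lam d L × Fin 2) ℂ) (x : Lam d L) :
    Matrix (Fin 2) (Fin 2) ℂ :=
  Matrix.of fun σ τ => γ (x, σ) (x, τ)

/-- The Hartree--Fock functional
`𝓔_HF(γ) = Tr[(T⊗1)γ] + (g/2) ∑_x (ρ_x² - |v⃗_x|²)`. -/
noncomputable def Ehf (d L : ℕ) [NeZero L] (g : ℝ)
    (γ : Matrix (Lam d L × Fin 2) (Lam d L × Fin 2) ℂ) : ℝ :=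
  (((hopT d L) ⊗ₖ (1 : Matrix (Fin 2) (Fin 2) ℂ)) * γ).trace.re
    + g / 2 * ∑ x : Lam d L,
      (((spinBlock γ x).trace.re) ^ 2
        - (((sigma1 * spinBlock γ x).trace.re) ^ 2
            + ((sigma2 * spinBlock γ x).trace.re) ^ 2
            + ((sigma3 * spinBlock γ x).trace.re) ^ 2))

/-- The constraint set `0 ≤ γ ≤ 1`, `Tr γ = N` of reduced one-particle density matrices. -/
def IsOPDM {d L : ℕ} [NeZero L] (N : ℕ)
    (γ : Matrix (Lam d L × Fin 2) (Lam d L × Fin 2) ℂ) : Prop :=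
  γ.PosSemidef ∧ ((1 : Matrix (Lam d L × Fin 2) (Lam d L × Fin 2) ℂ) - γ).PosSemidef
    ∧ γ.trace = (N : ℂ)

/-- Spectral projection `1[A < 0]` onto the negative eigenvalues of a Hermitian matrix
(junk value `0` if `A` is not Hermitian). -/
noncomputable def specProjNeg {n : Type*} [Fintype n] [DecidableEq n]
    (A : Matrix n n ℂ) : Matrix n n ℂ :=
  if hA : A.IsHermitian then
    (hA.eigenvectorUnitary : Matrix n n ℂ)
      * Matrix.diagonal (fun i => if hA.eigenvalues i < 0 then (1 : ℂ) else 0)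
      * star (hA.eigenvectorUnitary : Matrix n n ℂ)
  else 0

/-- Spectral projection `1[A ≤ 0]` onto the nonpositive eigenvalues of a Hermitian matrix
(junk value `0` if `A` is not Hermitian). -/
noncomputable def specProjNonpos {n : Type*} [Fintype n] [DecidableEq n]
    (A : Matrix n n ℂ) : Matrix n n ℂ :=
  if hA : A.IsHermitian then
    (hA.eigenvectorUnitary : Matrix n n ℂ)
      * Matrix.diagonal (fun i => if hA.eigenvalues i ≤ 0 then (1 : ℂ) else 0)
      * star (hA.eigenvectorUnitary : Matrix n n ℂ)
  else 0

/-- The positive square root `√A` of a positive semidefinite Hermitian matrix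
(junk value `0` if `A` is not Hermitian). -/
noncomputable def matSqrt {n : Type*} [Fintype n] [DecidableEq n]
    (A : Matrix n n ℂ) : Matrix n n ℂ :=
  if hA : A.IsHermitian then
    (hA.eigenvectorUnitary : Matrix n n ℂ)
      * Matrix.diagonal (fun i => (Real.sqrt (hA.eigenvalues i) : ℂ))
      * star (hA.eigenvectorUnitary : Matrix n n ℂ)
  else 0

/-- The negative part `A₋ = (A - |A|)/2` of a Hermitian matrix, i.e. the spectral
function `λ ↦ min λ 0` applied to `A` (junk value `0` if `A` is not Hermitian). -/
noncomputable def matNegPart {n : Type*} [Fintype n] [DecidableEq n]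
    (A : Matrix n n ℂ) : Matrix n n ℂ :=
  if hA : A.IsHermitian then
    (hA.eigenvectorUnitary : Matrix n n ℂ)
      * Matrix.diagonal (fun i => ((min (hA.eigenvalues i) 0 : ℝ) : ℂ))
      * star (hA.eigenvectorUnitary : Matrix n n ℂ)
  else 0

/-- The sign `(-1)^x = (-1)^{x₁+⋯+x_d}` of a lattice site, as a real number. -/
noncomputable def latSign {d L : ℕ} (x : Lam d L) : ℝ := (-1 : ℝ) ^ (∑ ν, (x ν).val)

/-- The spin values `↑ ≡ +1`, `↓ ≡ -1`. -/
noncomputable def spinVal (τ : Fin 2) : ℝ := if τ = 0 then 1 else -1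

/-!
Multiplying the gap equation by `Δ` writes `2Δ` as the mean of `c_ξ = gΔ/√(ω_ξ² + g²Δ²)`.
By Cauchy–Schwarz `4Δ²` is at most the mean of `c_ξ² = 1 - ω_ξ²/(ω_ξ² + g²Δ²)`, and since
`g²Δ² ≤ (g/2)²` this is at most `1 - a`. Hence `1 - 4Δ² ≥ a ≥ a/(1+a)`, and `a ≤ 1` gives
`a/(1+a) ≥ a/2`.
-/

open Finset

lemma sq_mean_le_mean_sq {ι : Type*} [Fintype ι] (f : ι → ℝ) :
    ((Fintype.card ι : ℝ)⁻¹ * ∑ i, f i) ^ 2 ≤ (Fintype.card ι : ℝ)⁻¹ * ∑ i, f i ^ 2 := by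
  set c : ℝ := (Fintype.card ι : ℝ)
  calc (c⁻¹ * ∑ i, f i) ^ 2 = c⁻¹ ^ 2 * (∑ i, f i) ^ 2 := mul_pow _ _ _
    _ ≤ c⁻¹ ^ 2 * (c * ∑ i, f i ^ 2) := by
        gcongr
        simpa using sq_sum_le_card_mul_sum_sq (s := univ) (f := f)
    _ = c⁻¹ * ∑ i, f i ^ 2 := by
        rcases eq_or_ne c 0 with hc | hc
        · simp [hc]
        · field_simp

lemma div_add_le_one_sub_div_add {w s t : ℝ} (hw : 0 ≤ w) (hs : 0 ≤ s) (hst : s ≤ t) :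
    s / (w + s) ≤ 1 - w / (w + t) := by
  rcases (add_nonneg hw hs).eq_or_lt with h | h
  · have hw0 : w = 0 := by linarith
    have hs0 : s = 0 := by linarith
    simp [hs0, hw0]
  · have hle : w / (w + t) ≤ w / (w + s) := div_le_div_of_nonneg_left hw h (by linarith)
    have hsplit : s / (w + s) = 1 - w / (w + s) := by field_simp; ring
    linarith

lemma sq_mul_div_sqrt_le {ω g Δ : ℝ} (hΔ : Δ ^ 2 ≤ 1 / 4) :
    (Δ * (g / √(ω ^ 2 + g ^ 2 * Δ ^ 2))) ^ 2 ≤ 1 - ω ^ 2 / (ω ^ 2 + (g / 2) ^ 2) := by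
  rw [mul_pow, div_pow, Real.sq_sqrt (by positivity), ← mul_div_assoc, mul_comm (Δ ^ 2)]
  refine div_add_le_one_sub_div_add (sq_nonneg ω) (by positivity) ?_
  nlinarith [sq_nonneg g]

lemma four_mul_sq_le_one_sub_mean_of_gap {ι : Type*} [Fintype ι] (ω : ι → ℝ) {g Δ : ℝ}
    (hΔ : Δ ^ 2 ≤ 1 / 4)
    (hgap : (2 : ℝ) = (Fintype.card ι : ℝ)⁻¹ * ∑ i, g / √(ω i ^ 2 + g ^ 2 * Δ ^ 2)) :
    4 * Δ ^ 2 ≤ 1 - (Fintype.card ι : ℝ)⁻¹ * ∑ i, ω i ^ 2 / (ω i ^ 2 + (g / 2) ^ 2) := by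
  set c : ℝ := (Fintype.card ι : ℝ)
  have hc : c ≠ 0 := by
    rintro hc
    rw [hc, _root_.inv_zero, zero_mul] at hgap
    norm_num at hgap
  have hmean : 2 * Δ = c⁻¹ * ∑ i, Δ * (g / √(ω i ^ 2 + g ^ 2 * Δ ^ 2)) := by
    rw [← mul_sum, mul_left_comm, ← hgap, mul_comm]
  calc 4 * Δ ^ 2 = (2 * Δ) ^ 2 := by ring
    _ ≤ c⁻¹ * ∑ i, (Δ * (g / √(ω i ^ 2 + g ^ 2 * Δ ^ 2))) ^ 2 :=
        hmean ▸ sq_mean_le_mean_sq _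
    _ ≤ c⁻¹ * ∑ i, (1 - ω i ^ 2 / (ω i ^ 2 + (g / 2) ^ 2)) := by
        gcongr with i
        exact sq_mul_div_sqrt_le hΔ
    _ = 1 - c⁻¹ * ∑ i, ω i ^ 2 / (ω i ^ 2 + (g / 2) ^ 2) := by
        rw [sum_sub_distrib, mul_sub, sum_const, card_univ, nsmul_one, inv_mul_cancel₀ hc]

theorem gap_solution_lower_bound_general (d L : ℕ) [NeZero L] (g : ℝ)
    (Δ : ℝ) (hΔ : Δ ∈ Set.Ioo (0 : ℝ) (1/2))
    (hgap : (2 : ℝ) = ((L : ℝ) ^ d)⁻¹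
      * ∑ ξ : Lam d L, g / Real.sqrt (omega d L ξ ^ 2 + g ^ 2 * Δ ^ 2))
    (a : ℝ)
    (ha : a = ((L : ℝ) ^ d)⁻¹
      * ∑ ξ : Lam d L, omega d L ξ ^ 2 / (omega d L ξ ^ 2 + (g / 2) ^ 2)) :
    1 - 4 * Δ ^ 2 ≥ a / (1 + a) ∧ a / (1 + a) ≥ a / 2 := by
  have hcard : (Fintype.card (Lam d L) : ℝ) = (L : ℝ) ^ d := by simp [Lam, ZMod.card]
  rw [← hcard] at hgap ha
  have hΔsq : Δ ^ 2 ≤ 1 / 4 := by nlinarith [hΔ.1, hΔ.2]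
  have hgap_bound : 4 * Δ ^ 2 ≤ 1 - a := ha ▸ four_mul_sq_le_one_sub_mean_of_gap _ hΔsq hgap
  have ha0 : 0 ≤ a := by rw [ha]; positivity
  have ha1 : a ≤ 1 := by linarith [sq_nonneg Δ]
  refine ⟨?_, div_le_div_of_nonneg_left ha0 (by linarith) (by linarith)⟩
  have hdiv : a / (1 + a) ≤ a := div_le_self ha0 (by linarith)
  linarith

/-- For the solution `Δ ∈ (0,1/2)` of the gap equation one has
`1 − 4Δ² ≥ a/(1+a) ≥ a/2` where `a = |Λ|⁻¹ Σ_ξ ω_ξ²/(ω_ξ² + (g/2)²)`. -/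
theorem gap_solution_lower_bound (d L : ℕ) [NeZero L] (hd : 1 ≤ d)
    (hL : ∃ m : ℕ, 1 ≤ m ∧ L = 4 * m) (g : ℝ) (hg : 0 < g)
    (Δ : ℝ) (hΔ : Δ ∈ Set.Ioo (0 : ℝ) (1/2))
    (hgap : (2 : ℝ) = ((L : ℝ) ^ d)⁻¹
      * ∑ ξ : Lam d L, g / Real.sqrt (omega d L ξ ^ 2 + g ^ 2 * Δ ^ 2))
    (a : ℝ)
    (ha : a = ((L : ℝ) ^ d)⁻¹
      * ∑ ξ : Lam d L, omega d L ξ ^ 2 / (omega d L ξ ^ 2 + (g / 2) ^ 2)) :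
    1 - 4 * Δ ^ 2 ≥ a / (1 + a) ∧ a / (1 + a) ≥ a / 2 :=
  gap_solution_lower_bound_general d L g Δ hΔ hgap a ha
end

section
/- Let d ∈ ℤ≥1, L ∈ 4ℤ≥1, g > 0 and Λ = (ℤ/Lℤ)^d. Then |Λ|^{-1} Σ_{ξ∈Λ*} ω_ξ² / (ω_ξ² + (g/2)²) ≥ 4^{-d} · d² / (d² + g²). -/
open Matrix
open scoped Kronecker BigOperators ComplexOrder

/-!
The cosine is at least `1/2` on the arc `|θ| ≤ π/3`, and for `L = 4m` at least `m` residues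
`z ∈ ℤ/Lℤ` have their angle `2πz/L` on that arc (the images of the integers `|j| ≤ L/6`).
For the `m^d` momenta built from these residues `ω_ξ ≤ -d/2`, and since `t ↦ t/(t + b)` is
nondecreasing on `t ≥ 0`, each of their summands is at least
`(d/2)²/((d/2)² + (g/2)²) = d²/(d² + g²)`. Dropping the other, nonnegative, summands and
dividing by `L^d = 4^d m^d` gives the bound.
-/

open Real Finset

lemma Real.half_le_cos_of_abs_le {θ : ℝ} (h : |θ| ≤ π / 3) : 1 / 2 ≤ cos θ := by
  rw [← cos_abs, ← cos_pi_div_three]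
  exact cos_le_cos_of_nonneg_of_le_pi (abs_nonneg θ) (by linarith [pi_pos]) h

lemma div_add_le_div_add_of_le {a x b : ℝ} (ha : 0 ≤ a) (hax : a ≤ x) (hb : 0 ≤ b) :
    a / (a + b) ≤ x / (x + b) := by
  rcases (add_nonneg ha hb).eq_or_lt with hab | hab
  · rw [← hab, div_zero]
    exact div_nonneg (ha.trans hax) (by linarith)
  · rw [div_le_div_iff₀ hab (by linarith)]
    nlinarith

lemma cos_two_pi_mul_val_intCast_div (L : ℕ) [NeZero L] (j : ℤ) :
    cos (2 * π * ((j : ZMod L).val : ℝ) / L) = cos (2 * π * j / L) := by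
  have hL : (L : ℝ) ≠ 0 := NeZero.ne _
  have hval : (((j : ZMod L).val : ℤ) : ℝ) = ((j % L : ℤ) : ℝ) := by rw [ZMod.val_intCast]
  push_cast at hval
  rw [hval, ← cos_add_int_mul_two_pi _ (j / L)]
  congr 1
  rw [Int.emod_def]
  push_cast
  field_simp
  ring

noncomputable def cosArc (L : ℕ) [NeZero L] : Finset (ZMod L) :=
  univ.filter fun z => 1 / 2 ≤ cos (2 * π * (z.val : ℝ) / L)

lemma two_mul_div_six_add_one_le_card_cosArc (L : ℕ) [NeZero L] :
    2 * (L / 6) + 1 ≤ #(cosArc L) := by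
  set t : ℤ := ((L / 6 : ℕ) : ℤ)
  have hL : 0 < L := Nat.pos_of_ne_zero (NeZero.ne L)
  have hL' : (0 : ℝ) < L := Nat.cast_pos.mpr hL
  have hLt : 6 * t ≤ L := by omega
  have hmaps : ∀ j ∈ Icc (-t) t, ((j : ZMod L)) ∈ cosArc L := by
    intro j hj
    rw [mem_Icc] at hj
    simp only [cosArc, mem_filter, mem_univ, true_and, cos_two_pi_mul_val_intCast_div]
    apply half_le_cos_of_abs_le
    have hjt : |j| ≤ t := abs_le.mpr ⟨by omega, by omega⟩
    have hj' : 6 * |(j : ℝ)| ≤ L := by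
      rw [← Int.cast_abs]; exact_mod_cast (by omega : 6 * |j| ≤ L)
    rw [abs_div, abs_mul, abs_of_pos (by positivity : (0 : ℝ) < 2 * π), abs_of_pos hL',
      div_le_div_iff₀ hL' (by norm_num)]
    nlinarith [pi_pos]
  have hinj : Set.InjOn (fun j : ℤ => (j : ZMod L)) (Icc (-t) t) := by
    intro a ha b hb hab
    simp only [coe_Icc, Set.mem_Icc] at ha hb
    have hdvd : (L : ℤ) ∣ b - a := ((ZMod.intCast_eq_intCast_iff a b L).mp hab).dvd
    have := Int.eq_zero_of_abs_lt_dvd hdvd (by rw [abs_lt]; omega)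
    omega
  calc 2 * (L / 6) + 1 = #(Icc (-t) t) := by simp [t]; omega
    _ ≤ #(cosArc L) := card_le_card_of_injOn _ hmaps hinj

lemma omega_le_neg_half_of_mem_piFinset_cosArc {d L : ℕ} [NeZero L] {ξ : Lam d L}
    (hξ : ξ ∈ Fintype.piFinset fun _ => cosArc L) : omega d L ξ ≤ -((d : ℝ) / 2) := by
  have hcos := sum_le_sum fun ν (_ : ν ∈ univ) =>
    (mem_filter.mp (Fintype.mem_piFinset.mp hξ ν)).2
  rw [sum_const, card_univ, Fintype.card_fin, nsmul_eq_mul] at hcos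
  rw [omega]
  linarith

lemma sq_div_sq_add_sq_le_omega_ratio {d L : ℕ} [NeZero L] (g : ℝ) {ξ : Lam d L}
    (hξ : ξ ∈ Fintype.piFinset fun _ => cosArc L) :
    (d : ℝ) ^ 2 / (d ^ 2 + g ^ 2) ≤ omega d L ξ ^ 2 / (omega d L ξ ^ 2 + (g / 2) ^ 2) := by
  have hω : ((d : ℝ) / 2) ^ 2 ≤ omega d L ξ ^ 2 := by
    have := omega_le_neg_half_of_mem_piFinset_cosArc hξ
    nlinarith [(by positivity : (0 : ℝ) ≤ d / 2)]
  calc (d : ℝ) ^ 2 / (d ^ 2 + g ^ 2) = ((d : ℝ) / 2) ^ 2 / ((d / 2) ^ 2 + (g / 2) ^ 2) := by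
        rw [div_pow, div_pow, ← add_div, div_div_div_cancel_right₀ (by norm_num)]
    _ ≤ _ := div_add_le_div_add_of_le (sq_nonneg _) hω (sq_nonneg _)

theorem dispersion_average_lower_bound_general (d L : ℕ) [NeZero L]
    (hL : ∃ m : ℕ, 1 ≤ m ∧ L = 4 * m) (g : ℝ) :
    ((L : ℝ) ^ d)⁻¹ * ∑ ξ : Lam d L, omega d L ξ ^ 2 / (omega d L ξ ^ 2 + (g / 2) ^ 2)
      ≥ ((4 : ℝ) ^ d)⁻¹ * ((d : ℝ) ^ 2 / ((d : ℝ) ^ 2 + g ^ 2)) := by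
  obtain ⟨m, hm, rfl⟩ := hL
  set c : ℝ := (d : ℝ) ^ 2 / ((d : ℝ) ^ 2 + g ^ 2)
  set S := Fintype.piFinset fun _ : Fin d => cosArc (4 * m)
  have hcard : (m : ℝ) ^ d ≤ #S := by
    rw [Fintype.card_piFinset_const, Nat.cast_pow]
    gcongr
    exact_mod_cast (two_mul_div_six_add_one_le_card_cosArc (4 * m)).trans' (by omega)
  have hsum : (m : ℝ) ^ d * c
      ≤ ∑ ξ : Lam d (4 * m), omega d _ ξ ^ 2 / (omega d _ ξ ^ 2 + (g / 2) ^ 2) :=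
    calc (m : ℝ) ^ d * c ≤ #S * c := by gcongr
      _ ≤ ∑ ξ ∈ S, omega d _ ξ ^ 2 / (omega d _ ξ ^ 2 + (g / 2) ^ 2) := by
        rw [← nsmul_eq_mul]
        exact card_nsmul_le_sum _ _ _ fun ξ hξ => sq_div_sq_add_sq_le_omega_ratio g hξ
      _ ≤ _ := sum_le_sum_of_subset_of_nonneg (subset_univ S) fun _ _ _ => by positivity
  calc ((4 : ℝ) ^ d)⁻¹ * c = (((4 * m : ℕ) : ℝ) ^ d)⁻¹ * ((m : ℝ) ^ d * c) := by
        push_cast; rw [mul_pow]; field_simp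
    _ ≤ _ := by gcongr

/-- The lower bound
`|Λ|⁻¹ Σ_ξ ω_ξ²/(ω_ξ² + (g/2)²) ≥ 4⁻ᵈ · d²/(d² + g²)`. -/
theorem dispersion_average_lower_bound (d L : ℕ) [NeZero L] (hd : 1 ≤ d)
    (hL : ∃ m : ℕ, 1 ≤ m ∧ L = 4 * m) (g : ℝ) (hg : 0 < g) :
    ((L : ℝ) ^ d)⁻¹ * ∑ ξ : Lam d L, omega d L ξ ^ 2 / (omega d L ξ ^ 2 + (g / 2) ^ 2)
      ≥ ((4 : ℝ) ^ d)⁻¹ * ((d : ℝ) ^ 2 / ((d : ℝ) ^ 2 + g ^ 2)) :=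
  dispersion_average_lower_bound_general d L hL g
end

section
/- Let d ∈ ℤ≥1, L ∈ ℤ≥1 even, g > 0, Λ = (ℤ/Lℤ)^d. Then for every self-adjoint γ on h = ℓ²(Λ×{↑,↓}) with 0 ≤ γ ≤ 1 and Tr(γ) = |Λ|, one has 𝓔_HF(γ) ≥ (g/2)|Λ| + min over all families w = (w⃗_x)_{x∈Λ} with w⃗_x ∈ ℝ³, |w⃗_x| ≤ 2, of { Tr[ (T⊗1 − g Σ_{x∈Λ} E_{x,x}⊗(w⃗_x·σ⃗))_− ] + (g/2) Σ_{x∈Λ} |w⃗_x|² }, where A_− := (A − |A|)/2 denotes the negative part of a Hermitian matrix A (so Tr[A_−] is the sum of its negative eigenvalues). -/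
open Matrix
open scoped Kronecker BigOperators ComplexOrder

/-! Take for `w⃗ₓ` the spin vector `v⃗ₓ = Tr(σ⃗ γₓ)` of `γ` itself; `|v⃗ₓ| ≤ ρₓ ≤ 2` since
`0 ≤ γₓ ≤ 1`. With this choice the exchange term is linearised exactly:
`𝓔_HF(γ) = Tr[H_v γ] + (g/2) ∑ₓ |v⃗ₓ|² + (g/2) ∑ₓ ρₓ²`, where `H_v = T ⊗ 1 − g ∑ₓ Eₓₓ ⊗ (v⃗ₓ · σ⃗)`.
For `0 ≤ γ ≤ 1` one has `Tr[H γ] ≥ Tr H₋` (diagonalise `H`: the diagonal of `γ` in the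
eigenbasis lies in `[0, 1]`), and `∑ₓ ρₓ² ≥ ∑ₓ (2ρₓ − 1) = |Λ|` because `∑ₓ ρₓ = Tr γ = |Λ|`.
The infimum is over a set bounded below, as `Tr H₋ ≥ −(dim + ∑ᵢⱼ |Hᵢⱼ|²)/2`. -/

namespace Matrix

lemma re_apply_self_mem_Icc {n : Type*} [DecidableEq n] {B : Matrix n n ℂ} (h0 : B.PosSemidef)
    (h1 : (1 - B).PosSemidef) (i : n) : (B i i).re ∈ Set.Icc 0 1 := by
  have hB := Complex.nonneg_iff.mp (h0.diag_nonneg (i := i))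
  have h1B := Complex.nonneg_iff.mp (h1.diag_nonneg (i := i))
  simp only [sub_apply, one_apply_eq, Complex.sub_re, Complex.one_re] at h1B
  exact ⟨hB.1, by linarith [h1B.1]⟩

namespace IsHermitian

variable {n : Type*} [Fintype n] [DecidableEq n] {A : Matrix n n ℂ} (hA : A.IsHermitian)
include hA

lemma trace_mul_eq_sum (B : Matrix n n ℂ) :
    (A * B).trace = ∑ i, (hA.eigenvalues i : ℂ) *
      (star (hA.eigenvectorUnitary : Matrix n n ℂ) * B * hA.eigenvectorUnitary) i i := by
  conv_lhs => rw [hA.spectral_theorem, Unitary.conjStarAlgAut_apply]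
  rw [mul_assoc, mul_assoc, trace_mul_comm, mul_assoc, mul_assoc]
  simp only [trace, diag_apply, diagonal_mul, Function.comp_apply]
  rfl

lemma re_trace_matNegPart : (matNegPart A).trace.re = ∑ i, min (hA.eigenvalues i) 0 := by
  rw [matNegPart, dif_pos hA, trace_mul_cycle, Unitary.coe_star_mul_self, one_mul,
    trace_diagonal, Complex.re_sum]
  simp

lemma re_trace_matNegPart_le {γ : Matrix n n ℂ} (hγ : γ.PosSemidef)
    (hγ1 : (1 - γ).PosSemidef) : (matNegPart A).trace.re ≤ (A * γ).trace.re := by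
  set U := (hA.eigenvectorUnitary : Matrix n n ℂ)
  have hB : (star U * γ * U).PosSemidef := hγ.conjTranspose_mul_mul_same U
  have hB1 : (1 - star U * γ * U).PosSemidef := by
    simpa [mul_sub, sub_mul, U, ← star_eq_conjTranspose] using hγ1.conjTranspose_mul_mul_same U
  rw [hA.re_trace_matNegPart, hA.trace_mul_eq_sum, Complex.re_sum]
  refine Finset.sum_le_sum fun i _ => ?_
  obtain ⟨h0, h1⟩ := re_apply_self_mem_Icc hB hB1 i
  rw [Complex.re_ofReal_mul]
  rcases le_total (hA.eigenvalues i) 0 with h | h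
  · rw [min_eq_left h]; nlinarith
  · rw [min_eq_right h]; positivity

lemma sum_eigenvalues_sq : ∑ i, hA.eigenvalues i ^ 2 = ∑ i, ∑ j, ‖A i j‖ ^ 2 := by
  have hdiag : star (hA.eigenvectorUnitary : Matrix n n ℂ) * A *
      (hA.eigenvectorUnitary : Matrix n n ℂ) = diagonal (RCLike.ofReal ∘ hA.eigenvalues) := by
    simpa using hA.conjStarAlgAut_star_eigenvectorUnitary
  apply Complex.ofReal_injective
  calc _ = (A * A).trace := by simp [hA.trace_mul_eq_sum, hdiag, sq]
    _ = _ := by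
      push_cast
      refine Finset.sum_congr rfl fun i _ => Finset.sum_congr rfl fun j _ => ?_
      dsimp only
      rw [← hA.apply j i, Complex.star_def, Complex.mul_conj']

lemma neg_le_re_trace_matNegPart :
    -((Fintype.card n + ∑ i, ∑ j, ‖A i j‖ ^ 2) / 2) ≤ (matNegPart A).trace.re := by
  have hsplit : -((Fintype.card n + ∑ i, hA.eigenvalues i ^ 2) / 2) =
      ∑ i, -((1 + hA.eigenvalues i ^ 2) / 2) := by
    simp [Finset.sum_neg_distrib, ← Finset.sum_div, Finset.sum_add_distrib]
  rw [hA.re_trace_matNegPart, ← hA.sum_eigenvalues_sq, hsplit]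
  refine Finset.sum_le_sum fun i _ => ?_
  rcases le_total (hA.eigenvalues i) 0 with h | h
  · rw [min_eq_left h]; nlinarith [sq_nonneg (hA.eigenvalues i + 1)]
  · rw [min_eq_right h]; nlinarith

end IsHermitian

end Matrix

noncomputable def pauliVec (B : Matrix (Fin 2) (Fin 2) ℂ) : EuclideanSpace ℝ (Fin 3) :=
  !₂[(sigma1 * B).trace.re, (sigma2 * B).trace.re, (sigma3 * B).trace.re]

lemma norm_pauliVec_sq (B : Matrix (Fin 2) (Fin 2) ℂ) :
    ‖pauliVec B‖ ^ 2 =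
      (sigma1 * B).trace.re ^ 2 + (sigma2 * B).trace.re ^ 2 + (sigma3 * B).trace.re ^ 2 := by
  simp [pauliVec, EuclideanSpace.norm_sq_eq, Fin.sum_univ_three]

lemma re_trace_pauliDot_mul (a : EuclideanSpace ℝ (Fin 3)) (B : Matrix (Fin 2) (Fin 2) ℂ) :
    (pauliDot a * B).trace.re = inner ℝ a (pauliVec B) := by
  simp [pauliDot, pauliVec, add_mul, trace_add, PiLp.inner_apply, Fin.sum_univ_three]
  ring

lemma Matrix.PosSemidef.norm_pauliVec_le {B : Matrix (Fin 2) (Fin 2) ℂ} (hB : B.PosSemidef) :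
    ‖pauliVec B‖ ≤ B.trace.re := by
  -- `‖pauliVec B‖² = (Tr B)² − 4 det B`
  have hdet := Complex.nonneg_iff.mp hB.det_nonneg
  have h0 := Complex.nonneg_iff.mp (hB.diag_nonneg (i := 0))
  have h1 := Complex.nonneg_iff.mp (hB.diag_nonneg (i := 1))
  have hconj : B 1 0 = star (B 0 1) := (hB.1.apply 1 0).symm
  rw [det_fin_two, hconj] at hdet
  have htr : 0 ≤ B.trace.re := by simpa [trace_fin_two] using add_nonneg h0.1 h1.1
  refine (pow_le_pow_iff_left₀ (norm_nonneg _) htr two_ne_zero).mp ?_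
  rw [norm_pauliVec_sq, eta_fin_two B, hconj]
  simp [sigma1, sigma2, sigma3, trace_fin_two] at hdet ⊢
  nlinarith

lemma isHermitian_pauliDot (a : EuclideanSpace ℝ (Fin 3)) : (pauliDot a).IsHermitian := by
  refine IsHermitian.ext fun i j => ?_
  fin_cases i <;> fin_cases j <;> simp [pauliDot, sigma1, sigma2, sigma3]

lemma norm_pauliDot_apply_le (a : EuclideanSpace ℝ (Fin 3)) (σ τ : Fin 2) :
    ‖pauliDot a σ τ‖ ≤ 3 * ‖a‖ := by
  have ha : ∀ k, |a k| ≤ ‖a‖ := fun k => by simpa using PiLp.norm_apply_le a k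
  have ha₀ := norm_nonneg a
  fin_cases σ <;> fin_cases τ <;> simp only [pauliDot, sigma1, sigma2, sigma3]
  all_goals
    refine (Complex.norm_le_abs_re_add_abs_im _).trans ?_
    simp
    linarith [ha 0, ha 1, ha 2]

lemma zdist_neg (L : ℕ) [NeZero L] (z : ZMod L) : zdist L (-z) = zdist L z := by
  rcases eq_or_ne z 0 with rfl | hz
  · simp
  · rw [zdist, zdist, ZMod.neg_val, if_neg hz, Nat.sub_sub_self (ZMod.val_lt z).le, min_comm]

lemma isHermitian_hopT (d L : ℕ) [NeZero L] : (hopT d L).IsHermitian := by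
  refine IsHermitian.ext fun x y => ?_
  have hsymm : ∀ ν, zdist L (y ν - x ν) = zdist L (x ν - y ν) := fun ν => by
    rw [← zdist_neg, neg_sub]
  simp only [hopT, of_apply, hsymm]
  split_ifs <;> simp

lemma norm_hopT_apply_le (d L : ℕ) [NeZero L] (x y : Lam d L) : ‖hopT d L x y‖ ≤ 1 := by
  simp only [hopT, of_apply]
  split_ifs <;> simp

section SpinBlock

variable {d L : ℕ} [NeZero L]

lemma Matrix.PosSemidef.spinBlock {γ : Matrix (Lam d L × Fin 2) (Lam d L × Fin 2) ℂ}
    (hγ : γ.PosSemidef) (x : Lam d L) : (spinBlock γ x).PosSemidef :=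
  hγ.submatrix _

lemma spinBlock_one_sub (γ : Matrix (Lam d L × Fin 2) (Lam d L × Fin 2) ℂ) (x : Lam d L) :
    spinBlock (1 - γ) x = 1 - spinBlock γ x := by
  ext σ τ
  simp [spinBlock, one_apply]

lemma re_trace_spinBlock_le_two {γ : Matrix (Lam d L × Fin 2) (Lam d L × Fin 2) ℂ}
    (hγ1 : (1 - γ).PosSemidef) (x : Lam d L) : (spinBlock γ x).trace.re ≤ 2 := by
  have h := Complex.nonneg_iff.mp (hγ1.spinBlock x).trace_nonneg
  rw [spinBlock_one_sub, trace_sub, trace_one] at h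
  simpa using h.1

lemma sum_trace_spinBlock (γ : Matrix (Lam d L × Fin 2) (Lam d L × Fin 2) ℂ) :
    ∑ x, (spinBlock γ x).trace = γ.trace := by
  simp [trace, spinBlock, Fintype.sum_prod_type]

lemma trace_single_kron_mul (x : Lam d L) (M : Matrix (Fin 2) (Fin 2) ℂ)
    (γ : Matrix (Lam d L × Fin 2) (Lam d L × Fin 2) ℂ) :
    ((single x x (1 : ℂ) ⊗ₖ M) * γ).trace = (M * spinBlock γ x).trace := by
  simp [trace, mul_apply, Fintype.sum_prod_type, single_apply, spinBlock, ite_and]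

end SpinBlock

lemma sum_single_kron_apply {m n : Type*} [Fintype m] [DecidableEq m] [DecidableEq n]
    (M : m → Matrix n n ℂ) (y z : m) (σ τ : n) :
    (∑ x, single x x (1 : ℂ) ⊗ₖ M x) (y, σ) (z, τ) = if y = z then M y σ τ else 0 := by
  simp [Matrix.sum_apply, single_apply, ite_and]

section MeanField

variable (d L : ℕ) [NeZero L] (g : ℝ)

noncomputable def meanFieldHamiltonian (w : Lam d L → EuclideanSpace ℝ (Fin 3)) :
    Matrix (Lam d L × Fin 2) (Lam d L × Fin 2) ℂ :=
  hopT d L ⊗ₖ (1 : Matrix (Fin 2) (Fin 2) ℂ)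
    - (g : ℂ) • ∑ x : Lam d L, single x x (1 : ℂ) ⊗ₖ pauliDot (w x)

noncomputable def meanFieldEnergy (w : Lam d L → EuclideanSpace ℝ (Fin 3)) : ℝ :=
  (matNegPart (meanFieldHamiltonian d L g w)).trace.re + g / 2 * ∑ x : Lam d L, ‖w x‖ ^ 2

variable {d L g}

lemma meanFieldHamiltonian_apply (w : Lam d L → EuclideanSpace ℝ (Fin 3)) (y z : Lam d L)
    (σ τ : Fin 2) : meanFieldHamiltonian d L g w (y, σ) (z, τ) =
      hopT d L y z * (1 : Matrix (Fin 2) (Fin 2) ℂ) σ τ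
        - g * if y = z then pauliDot (w y) σ τ else 0 := by
  simp [meanFieldHamiltonian, sum_single_kron_apply]

lemma isHermitian_meanFieldHamiltonian (w : Lam d L → EuclideanSpace ℝ (Fin 3)) :
    (meanFieldHamiltonian d L g w).IsHermitian := by
  refine IsHermitian.ext fun ⟨y, σ⟩ ⟨z, τ⟩ => ?_
  rw [meanFieldHamiltonian_apply, meanFieldHamiltonian_apply,
    ← (isHermitian_hopT d L).apply y z, ← isHermitian_one.apply σ τ]
  rcases eq_or_ne y z with rfl | h
  · simp [← (isHermitian_pauliDot (w y)).apply σ τ]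
  · simp [h, h.symm]

lemma norm_meanFieldHamiltonian_apply_le {r : ℝ} {w : Lam d L → EuclideanSpace ℝ (Fin 3)}
    (hw : ∀ x, ‖w x‖ ≤ r) (i j : Lam d L × Fin 2) :
    ‖meanFieldHamiltonian d L g w i j‖ ≤ 1 + |g| * (3 * r) := by
  obtain ⟨y, σ⟩ := i
  obtain ⟨z, τ⟩ := j
  rw [meanFieldHamiltonian_apply]
  refine (norm_sub_le _ _).trans (add_le_add ?_ ?_)
  · rw [norm_mul]
    refine mul_le_one₀ (norm_hopT_apply_le d L y z) (norm_nonneg _) ?_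
    rw [one_apply]
    split_ifs <;> simp
  · rw [norm_mul, Complex.norm_real, Real.norm_eq_abs]
    refine mul_le_mul_of_nonneg_left ?_ (abs_nonneg g)
    split_ifs
    · exact (norm_pauliDot_apply_le _ σ τ).trans (by linarith [hw y])
    · simpa using (norm_nonneg (w y)).trans (hw y)

lemma re_trace_meanFieldHamiltonian_mul (w : Lam d L → EuclideanSpace ℝ (Fin 3))
    (γ : Matrix (Lam d L × Fin 2) (Lam d L × Fin 2) ℂ) :
    (meanFieldHamiltonian d L g w * γ).trace.re =
      ((hopT d L ⊗ₖ (1 : Matrix (Fin 2) (Fin 2) ℂ)) * γ).trace.re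
        - g * ∑ x, inner ℝ (w x) (pauliVec (spinBlock γ x)) := by
  simp [meanFieldHamiltonian, sub_mul, Finset.sum_mul, trace_sum, trace_single_kron_mul,
    ← re_trace_pauliDot_mul]

lemma bddBelow_meanFieldEnergy (hg : 0 ≤ g) (r : ℝ) :
    BddBelow {E : ℝ | ∃ w : Lam d L → EuclideanSpace ℝ (Fin 3),
      (∀ x, ‖w x‖ ≤ r) ∧ E = meanFieldEnergy d L g w} := by
  set N := Fintype.card (Lam d L × Fin 2)
  set C := 1 + |g| * (3 * r)
  refine ⟨-((N + N * (N * C ^ 2)) / 2), ?_⟩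
  rintro E ⟨w, hw, rfl⟩
  have hentries : ∑ i, ∑ j, ‖meanFieldHamiltonian d L g w i j‖ ^ 2 ≤ N * (N * C ^ 2) := by
    refine (Finset.sum_le_sum fun i _ => Finset.sum_le_sum fun j _ =>
      pow_le_pow_left₀ (norm_nonneg _) (norm_meanFieldHamiltonian_apply_le hw i j) 2).trans_eq ?_
    simp [N, C]
  have hneg := (isHermitian_meanFieldHamiltonian (g := g) w).neg_le_re_trace_matNegPart
  have hw2 : 0 ≤ g / 2 * ∑ x, ‖w x‖ ^ 2 := by positivity
  rw [meanFieldEnergy]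
  linarith

lemma Ehf_eq_re_trace_meanFieldHamiltonian_mul_add
    (γ : Matrix (Lam d L × Fin 2) (Lam d L × Fin 2) ℂ) :
    Ehf d L g γ =
      (meanFieldHamiltonian d L g (fun x => pauliVec (spinBlock γ x)) * γ).trace.re
        + g / 2 * ∑ x, ‖pauliVec (spinBlock γ x)‖ ^ 2
        + g / 2 * ∑ x, (spinBlock γ x).trace.re ^ 2 := by
  simp only [Ehf, re_trace_meanFieldHamiltonian_mul, real_inner_self_eq_norm_sq,
    norm_pauliVec_sq, Finset.sum_sub_distrib]
  ring

end MeanField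

lemma card_le_sum_sq_of_sum_eq_card {ι : Type*} [Fintype ι] {f : ι → ℝ}
    (hf : ∑ i, f i = Fintype.card ι) : (Fintype.card ι : ℝ) ≤ ∑ i, f i ^ 2 := by
  have h : ∑ i, (2 * f i - 1) ≤ ∑ i, f i ^ 2 :=
    Finset.sum_le_sum fun i _ => by nlinarith [sq_nonneg (f i - 1)]
  simp only [Finset.sum_sub_distrib, ← Finset.mul_sum, hf, Finset.sum_const, Finset.card_univ,
    nsmul_eq_mul, mul_one] at h
  linarith

theorem hf_variational_lower_bound_general (d L : ℕ) [NeZero L]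
    (g : ℝ) (hg : 0 < g)
    (γ : Matrix (Lam d L × Fin 2) (Lam d L × Fin 2) ℂ) (hγ : IsOPDM (L ^ d) γ) :
    Ehf d L g γ ≥ g / 2 * (L : ℝ) ^ d
      + sInf {E : ℝ | ∃ w : Lam d L → EuclideanSpace ℝ (Fin 3),
          (∀ x, ‖w x‖ ≤ 2) ∧
          E = (matNegPart (hopT d L ⊗ₖ (1 : Matrix (Fin 2) (Fin 2) ℂ)
                - (g : ℂ) • ∑ x : Lam d L,
                    Matrix.single x x (1 : ℂ) ⊗ₖ pauliDot (w x))).trace.re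
              + g / 2 * ∑ x : Lam d L, ‖w x‖ ^ 2} := by
  obtain ⟨hγ0, hγ1, htr⟩ := hγ
  set v := fun x => pauliVec (spinBlock γ x)
  have hv : ∀ x, ‖v x‖ ≤ 2 := fun x =>
    (hγ0.spinBlock x).norm_pauliVec_le.trans (re_trace_spinBlock_le_two hγ1 x)
  have hcard : (Fintype.card (Lam d L) : ℝ) = (L : ℝ) ^ d := by simp
  have hdensity : (L : ℝ) ^ d ≤ ∑ x, (spinBlock γ x).trace.re ^ 2 := by
    rw [← hcard]
    refine card_le_sum_sq_of_sum_eq_card ?_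
    rw [hcard, ← Complex.re_sum, sum_trace_spinBlock, htr]
    norm_cast
  have hinf := csInf_le (bddBelow_meanFieldEnergy hg.le 2) ⟨v, hv, rfl⟩
  have hvar := (isHermitian_meanFieldHamiltonian (g := g) v).re_trace_matNegPart_le hγ0 hγ1
  show g / 2 * (L : ℝ) ^ d + sInf {E | ∃ w, (∀ x, ‖w x‖ ≤ 2) ∧ E = meanFieldEnergy d L g w}
    ≤ Ehf d L g γ
  calc _ ≤ g / 2 * ∑ x, (spinBlock γ x).trace.re ^ 2 + meanFieldEnergy d L g v :=
        add_le_add (mul_le_mul_of_nonneg_left hdensity (by positivity)) hinf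
    _ ≤ Ehf d L g γ := by
        rw [Ehf_eq_re_trace_meanFieldHamiltonian_mul_add, meanFieldEnergy]
        linarith

/-- The variational lower bound
`𝓔_HF(γ) ≥ (g/2)|Λ| + min_w { Tr[(T⊗1 − g Σ_x E_{x,x}⊗(w⃗_x·σ⃗))₋] + (g/2) Σ_x |w⃗_x|² }`,
the minimum being over all families `w = (w⃗_x)_{x∈Λ}` with `|w⃗_x| ≤ 2`. -/
theorem hf_variational_lower_bound (d L : ℕ) [NeZero L] (hd : 1 ≤ d) (hL : 2 ∣ L)
    (g : ℝ) (hg : 0 < g)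
    (γ : Matrix (Lam d L × Fin 2) (Lam d L × Fin 2) ℂ) (hγ : IsOPDM (L ^ d) γ) :
    Ehf d L g γ ≥ g / 2 * (L : ℝ) ^ d
      + sInf {E : ℝ | ∃ w : Lam d L → EuclideanSpace ℝ (Fin 3),
          (∀ x, ‖w x‖ ≤ 2) ∧
          E = (matNegPart (hopT d L ⊗ₖ (1 : Matrix (Fin 2) (Fin 2) ℂ)
                - (g : ℂ) • ∑ x : Lam d L,
                    Matrix.single x x (1 : ℂ) ⊗ₖ pauliDot (w x))).trace.re
              + g / 2 * ∑ x : Lam d L, ‖w x‖ ^ 2} :=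
  hf_variational_lower_bound_general d L g hg γ hγ
end

section
/- Let d ∈ ℤ≥1, L ∈ 4ℤ≥1, g > 0, Λ = (ℤ/Lℤ)^d, and define 𝓕_L : (0,∞) → ℝ by 𝓕_L(η) := gη − |Λ|^{-1} Σ_{ξ∈Λ*} √(ω_ξ² + g²η). Then 𝓕_L is smooth with 𝓕_L''(η) > 0 for all η > 0 (strict convexity), 𝓕_L'(η) → −∞ as η → 0⁺ (since ω_ξ = 0 for ξ = (π/2,…,π/2) ∈ Λ* when L ∈ 4ℤ), and 𝓕_L'(η) > 0 for every η ≥ 1/4. -/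
open Matrix
open scoped Kronecker BigOperators ComplexOrder

/-- The function `𝓕_L(η) = gη − |Λ|⁻¹ Σ_ξ √(ω_ξ² + g²η)`. -/
noncomputable def FL (d L : ℕ) [NeZero L] (g η : ℝ) : ℝ :=
  g * η - ((L : ℝ) ^ d)⁻¹ * ∑ ξ : Lam d L, Real.sqrt (omega d L ξ ^ 2 + g ^ 2 * η)


noncomputable def D1fun (d L : ℕ) [NeZero L] (g : ℝ) : ℝ → ℝ :=
  fun η => g - ((L : ℝ) ^ d)⁻¹ * ∑ ξ : Lam d L, g ^ 2 / (2 * Real.sqrt (omega d L ξ ^ 2 + g ^ 2 * η))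

lemma sPos {g η : ℝ} (hg : 0 < g) (hη : 0 < η) (w : ℝ) : 0 < w ^ 2 + g ^ 2 * η :=
  add_pos_of_nonneg_of_pos (sq_nonneg w) (mul_pos (pow_pos hg 2) hη)

lemma sqrtTerm_hasDerivAt {g η : ℝ} (hg : 0 < g) (hη : 0 < η) (w : ℝ) :
    HasDerivAt (fun η => Real.sqrt (w ^ 2 + g ^ 2 * η))
      (g ^ 2 / (2 * Real.sqrt (w ^ 2 + g ^ 2 * η))) η := by
  have hs := sPos hg hη w
  have hin : HasDerivAt (fun η : ℝ => w ^ 2 + g ^ 2 * η) (g ^ 2) η := by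
    simpa using ((hasDerivAt_id η).const_mul (g ^ 2)).const_add (w ^ 2)
  have h := (Real.hasDerivAt_sqrt (ne_of_gt hs)).comp η hin
  refine h.congr_deriv ?_
  ring

lemma term2_hasDerivAt {g η : ℝ} (hg : 0 < g) (hη : 0 < η) (w : ℝ) :
    HasDerivAt (fun η => g ^ 2 / (2 * Real.sqrt (w ^ 2 + g ^ 2 * η)))
      (-(g ^ 4 / (4 * (w ^ 2 + g ^ 2 * η) * Real.sqrt (w ^ 2 + g ^ 2 * η)))) η := by
  have hs := sPos hg hη w
  have hsq : 0 < Real.sqrt (w ^ 2 + g ^ 2 * η) := Real.sqrt_pos.mpr hs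
  have hu : HasDerivAt (fun η => 2 * Real.sqrt (w ^ 2 + g ^ 2 * η))
      (2 * (g ^ 2 / (2 * Real.sqrt (w ^ 2 + g ^ 2 * η)))) η :=
    (sqrtTerm_hasDerivAt hg hη w).const_mul 2
  have h := (hasDerivAt_const η (g ^ 2)).div hu (by positivity)
  refine h.congr_deriv ?_
  have hss : Real.sqrt (w ^ 2 + g ^ 2 * η) ^ 2 = w ^ 2 + g ^ 2 * η := Real.sq_sqrt hs.le
  field_simp
  linear_combination (4 * g ^ 4) * hss

lemma omega_zero_eq (d L : ℕ) [NeZero L] (hd : 1 ≤ d) : omega d L 0 = -(d : ℝ) := by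
  unfold omega
  simp

lemma omega_quarter (d L : ℕ) [NeZero L] {m : ℕ} (hm : 1 ≤ m) (hLm : L = 4 * m) :
    omega d L (fun _ => (m : ZMod L)) = 0 := by
  unfold omega
  have hmL : m < L := by omega
  have hval : ((m : ZMod L)).val = m := ZMod.val_natCast_of_lt hmL
  have hcos : Real.cos (2 * Real.pi * (m : ℝ) / (L : ℝ)) = 0 := by
    have hm0 : (m : ℝ) ≠ 0 := by positivity
    have : 2 * Real.pi * (m : ℝ) / (L : ℝ) = Real.pi / 2 := by
      rw [hLm]; push_cast; field_simp; ring
    rw [this, Real.cos_pi_div_two]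
  simp [hval, hcos]

lemma card_Lam (d L : ℕ) [NeZero L] : Fintype.card (Lam d L) = L ^ d := by
  simp [Lam]

lemma FL_hasDerivAt (d L : ℕ) [NeZero L] {g : ℝ} (hg : 0 < g) {η : ℝ} (hη : 0 < η) :
    HasDerivAt (FL d L g) (D1fun d L g η) η := by
  have hsum : HasDerivAt (fun η => ∑ ξ : Lam d L, Real.sqrt (omega d L ξ ^ 2 + g ^ 2 * η))
      (∑ ξ : Lam d L, g ^ 2 / (2 * Real.sqrt (omega d L ξ ^ 2 + g ^ 2 * η))) η :=
    HasDerivAt.fun_sum fun ξ _ => sqrtTerm_hasDerivAt hg hη _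
  have h1 : HasDerivAt (fun η : ℝ => g * η) g η := by
    simpa using (hasDerivAt_id η).const_mul g
  unfold FL D1fun
  exact h1.sub (hsum.const_mul _)

/-- `𝓕_L` is smooth on `(0,∞)` with `𝓕_L'' > 0` there (strict convexity),
`𝓕_L'(η) → −∞` as `η → 0⁺`, and `𝓕_L'(η) > 0` for all `η ≥ 1/4`. -/
theorem FL_properties (d L : ℕ) [NeZero L] (hd : 1 ≤ d)
    (hL : ∃ m : ℕ, 1 ≤ m ∧ L = 4 * m) (g : ℝ) (hg : 0 < g) :
    ContDiffOn ℝ (⊤ : ℕ∞) (FL d L g) (Set.Ioi 0)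
    ∧ (∀ η ∈ Set.Ioi (0 : ℝ), 0 < deriv (deriv (FL d L g)) η)
    ∧ Filter.Tendsto (deriv (FL d L g)) (nhdsWithin 0 (Set.Ioi 0)) Filter.atBot
    ∧ (∀ η : ℝ, 1/4 ≤ η → 0 < deriv (FL d L g) η) := by
  obtain ⟨m, hm1, hLm⟩ := hL
  have hL1 : 1 ≤ L := Nat.one_le_iff_ne_zero.mpr (NeZero.ne L)
  set c : ℝ := ((L : ℝ) ^ d)⁻¹ with hc
  have hLpos : (0 : ℝ) < (L : ℝ) ^ d := by positivity
  have hcpos : 0 < c := by positivity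
  have hderiv : ∀ η ∈ Set.Ioi (0 : ℝ), deriv (FL d L g) η = D1fun d L g η :=
    fun η hη => (FL_hasDerivAt d L hg hη).deriv
  have hgη : ∀ η : ℝ, 0 < η → Real.sqrt (g ^ 2 * η) = g * Real.sqrt η := by
    intro η hη
    rw [Real.sqrt_mul (sq_nonneg g), Real.sqrt_sq hg.le]
  -- smoothness
  have hsmooth : ContDiffOn ℝ (⊤ : ℕ∞) (FL d L g) (Set.Ioi 0) := by
    unfold FL
    apply ContDiffOn.sub
    · exact (contDiff_const.mul contDiff_id).contDiffOn
    · apply ContDiffOn.mul contDiffOn_const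
      apply ContDiffOn.sum
      intro ξ _ η hη
      have hs := sPos hg hη (omega d L ξ)
      exact ((Real.contDiffAt_sqrt (ne_of_gt hs)).comp η
        ((contDiff_const.add (contDiff_const.mul contDiff_id)).contDiffAt)).contDiffWithinAt
  refine ⟨hsmooth, ?_, ?_, ?_⟩
  · -- second derivative positive
    intro η hη
    have hη' : (0:ℝ) < η := hη
    have hD1 : HasDerivAt (D1fun d L g)
        (0 - c * ∑ ξ : Lam d L,
          -(g ^ 4 / (4 * (omega d L ξ ^ 2 + g ^ 2 * η) * Real.sqrt (omega d L ξ ^ 2 + g ^ 2 * η)))) η := by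
      have hsum : HasDerivAt
          (fun η => ∑ ξ : Lam d L, g ^ 2 / (2 * Real.sqrt (omega d L ξ ^ 2 + g ^ 2 * η)))
          (∑ ξ : Lam d L,
            -(g ^ 4 / (4 * (omega d L ξ ^ 2 + g ^ 2 * η) * Real.sqrt (omega d L ξ ^ 2 + g ^ 2 * η)))) η :=
        HasDerivAt.fun_sum fun ξ _ => term2_hasDerivAt hg hη' _
      exact (hasDerivAt_const η g).sub (hsum.const_mul c)
    have hev : deriv (FL d L g) =ᶠ[nhds η] D1fun d L g :=
      Filter.eventuallyEq_of_mem (Ioi_mem_nhds hη') hderiv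
    rw [hev.deriv_eq, hD1.deriv]
    have : (0 : ℝ) - c * ∑ ξ : Lam d L,
        -(g ^ 4 / (4 * (omega d L ξ ^ 2 + g ^ 2 * η) * Real.sqrt (omega d L ξ ^ 2 + g ^ 2 * η)))
        = c * ∑ ξ : Lam d L,
          g ^ 4 / (4 * (omega d L ξ ^ 2 + g ^ 2 * η) * Real.sqrt (omega d L ξ ^ 2 + g ^ 2 * η)) := by
      rw [Finset.sum_neg_distrib]; ring
    rw [this]
    apply mul_pos hcpos
    apply Finset.sum_pos _ Finset.univ_nonempty
    intro ξ _
    have hs := sPos hg hη' (omega d L ξ)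
    have hsq := Real.sqrt_pos.mpr hs
    positivity
  · -- tendsto atBot
    set ξ0 : Lam d L := fun _ => (m : ZMod L) with hξ0
    have hω0 : omega d L ξ0 = 0 := omega_quarter d L hm1 hLm
    have hbound : ∀ η ∈ Set.Ioi (0:ℝ),
        D1fun d L g η ≤ g - (c * g / 2) * (Real.sqrt η)⁻¹ := by
      intro η hη
      have hη' : (0:ℝ) < η := hη
      have hsqη : 0 < Real.sqrt η := Real.sqrt_pos.mpr hη'
      have h0 : g ^ 2 / (2 * Real.sqrt (omega d L ξ0 ^ 2 + g ^ 2 * η))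
          = (g / 2) * (Real.sqrt η)⁻¹ := by
        rw [hω0]
        have : (0:ℝ) ^ 2 + g ^ 2 * η = g ^ 2 * η := by ring
        rw [this, hgη η hη']
        field_simp
      have hterm : (g / 2) * (Real.sqrt η)⁻¹
          ≤ ∑ ξ : Lam d L, g ^ 2 / (2 * Real.sqrt (omega d L ξ ^ 2 + g ^ 2 * η)) := by
        rw [← h0]
        apply Finset.single_le_sum (f := fun ξ : Lam d L =>
          g ^ 2 / (2 * Real.sqrt (omega d L ξ ^ 2 + g ^ 2 * η))) _ (Finset.mem_univ ξ0)
        intro ξ _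
        have hs := sPos hg hη' (omega d L ξ)
        have := Real.sqrt_pos.mpr hs
        positivity
      have := mul_le_mul_of_nonneg_left hterm hcpos.le
      unfold D1fun
      linarith
    have hB : Filter.Tendsto (fun η => g - (c * g / 2) * (Real.sqrt η)⁻¹)
        (nhdsWithin 0 (Set.Ioi 0)) Filter.atBot := by
      have hsq : Filter.Tendsto Real.sqrt (nhdsWithin 0 (Set.Ioi 0))
          (nhdsWithin 0 (Set.Ioi 0)) := by
        apply tendsto_nhdsWithin_of_tendsto_nhds_of_eventually_within
        · simpa using (Real.continuous_sqrt.tendsto 0).mono_left nhdsWithin_le_nhds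
        · exact Filter.eventually_of_mem self_mem_nhdsWithin
            (fun η hη => Real.sqrt_pos.mpr hη)
      have hinv : Filter.Tendsto (fun η => (Real.sqrt η)⁻¹)
          (nhdsWithin 0 (Set.Ioi 0)) Filter.atTop := tendsto_inv_nhdsGT_zero.comp hsq
      have hmul : Filter.Tendsto (fun η => (c * g / 2) * (Real.sqrt η)⁻¹)
          (nhdsWithin 0 (Set.Ioi 0)) Filter.atTop :=
        Filter.Tendsto.const_mul_atTop (by positivity) hinv
      have hneg : Filter.Tendsto (fun η => -((c * g / 2) * (Real.sqrt η)⁻¹))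
          (nhdsWithin 0 (Set.Ioi 0)) Filter.atBot := Filter.tendsto_neg_atTop_atBot.comp hmul
      simpa [sub_eq_add_neg] using Filter.tendsto_atBot_add_const_left _ g hneg
    have hD1tend : Filter.Tendsto (D1fun d L g) (nhdsWithin 0 (Set.Ioi 0)) Filter.atBot := by
      apply Filter.tendsto_atBot_mono' _ _ hB
      exact Filter.eventually_of_mem self_mem_nhdsWithin hbound
    apply hD1tend.congr'
    exact (Filter.eventuallyEq_of_mem self_mem_nhdsWithin hderiv).symm
  · -- positive for η ≥ 1/4
    intro η hη4
    have hη' : (0:ℝ) < η := lt_of_lt_of_le (by norm_num) hη4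
    rw [hderiv η hη']
    have hsqη : 0 < Real.sqrt η := Real.sqrt_pos.mpr hη'
    have hsqη2 : (1:ℝ)/2 ≤ Real.sqrt η := by
      rw [show (1:ℝ)/2 = Real.sqrt (1/4) by
        rw [show (1:ℝ)/4 = (1/2)^2 by norm_num, Real.sqrt_sq (by norm_num)]]
      exact Real.sqrt_le_sqrt hη4
    set B : ℝ := g / (2 * Real.sqrt η) with hB
    have hBg : B ≤ g := by
      rw [hB]
      apply div_le_self hg.le
      linarith
    have hterm_le : ∀ ξ : Lam d L,
        g ^ 2 / (2 * Real.sqrt (omega d L ξ ^ 2 + g ^ 2 * η)) ≤ B := by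
      intro ξ
      have hs := sPos hg hη' (omega d L ξ)
      have h1 : g ^ 2 * η ≤ omega d L ξ ^ 2 + g ^ 2 * η := by nlinarith [sq_nonneg (omega d L ξ)]
      have h2 : g * Real.sqrt η ≤ Real.sqrt (omega d L ξ ^ 2 + g ^ 2 * η) := by
        rw [← hgη η hη']; exact Real.sqrt_le_sqrt h1
      have h3 : g ^ 2 / (2 * Real.sqrt (omega d L ξ ^ 2 + g ^ 2 * η))
          ≤ g ^ 2 / (2 * (g * Real.sqrt η)) :=
        div_le_div_of_nonneg_left (by positivity) (by positivity) (by linarith)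
      have h4 : g ^ 2 / (2 * (g * Real.sqrt η)) = B := by
        rw [hB]; field_simp
      linarith
    have hterm_lt : g ^ 2 / (2 * Real.sqrt (omega d L 0 ^ 2 + g ^ 2 * η)) < B := by
      have hω : omega d L 0 = -(d : ℝ) := omega_zero_eq d L hd
      have hd1 : (1:ℝ) ≤ (d:ℝ) := by exact_mod_cast hd
      have h1 : g ^ 2 * η < omega d L 0 ^ 2 + g ^ 2 * η := by
        rw [hω]; nlinarith
      have h2 : g * Real.sqrt η < Real.sqrt (omega d L 0 ^ 2 + g ^ 2 * η) := by
        rw [← hgη η hη']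
        exact Real.sqrt_lt_sqrt (by positivity) h1
      have h3 : g ^ 2 / (2 * Real.sqrt (omega d L 0 ^ 2 + g ^ 2 * η))
          < g ^ 2 / (2 * (g * Real.sqrt η)) :=
        div_lt_div_of_pos_left (by positivity) (by positivity) (by linarith)
      have h4 : g ^ 2 / (2 * (g * Real.sqrt η)) = B := by
        rw [hB]; field_simp
      linarith
    have hS : ∑ ξ : Lam d L, g ^ 2 / (2 * Real.sqrt (omega d L ξ ^ 2 + g ^ 2 * η))
        < ((L : ℝ) ^ d) * B := by
      calc ∑ ξ : Lam d L, g ^ 2 / (2 * Real.sqrt (omega d L ξ ^ 2 + g ^ 2 * η))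
          < ∑ _ξ : Lam d L, B :=
            Finset.sum_lt_sum (fun ξ _ => hterm_le ξ) ⟨0, Finset.mem_univ 0, hterm_lt⟩
        _ = (Fintype.card (Lam d L) : ℝ) * B := by
            rw [Finset.sum_const, nsmul_eq_mul]; simp
        _ = ((L : ℝ) ^ d) * B := by rw [card_Lam]; push_cast; ring
    have hcS : c * ∑ ξ : Lam d L, g ^ 2 / (2 * Real.sqrt (omega d L ξ ^ 2 + g ^ 2 * η)) < B := by
      have := mul_lt_mul_of_pos_left hS hcpos
      rwa [hc, inv_mul_cancel_left₀ (ne_of_gt hLpos)] at this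
    unfold D1fun
    linarith
end
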